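/- arXiv:1904.06065 — 3 statements merged into one kernel-verified Lean document; each statement's English description precedes it below -/
import Mathlib

section
/- Let α, β > 0 with αβ > 2, γ > -1/β, K > 0, and let g : ℝ → ℝ satisfy g(x) = 0 for x ≤ 0 and |g(x)| ≤ K(x^γ 1_{0<x<1} + x^{-α} 1_{x≥1}) for x > 0. Define ρ_k = ∫_ℝ |g(x) g(x+k)|^{β/2} dx for k ∈ ℕ. Then there is a constant C such that ρ_k ≤ C k^{-αβ/2} for all k ≥ 1. -/
/-! Since `x + k ≥ k ≥ 1` for `x > 0`, the tail bound gives `|g (x + k)| ≤ K k^{-α}`, so that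
`|g x g (x + k)|^{β/2} ≤ K^β k^{-αβ/2} · (x^{γβ/2} 1_{(0,1)} + x^{-αβ/2} 1_{[1,∞)})`.
The last factor is integrable because `γβ/2 > -1` and `αβ/2 > 1`. -/

open MeasureTheory Real Set

noncomputable def powerProfile (a b x : ℝ) : ℝ :=
  x ^ a * (Ioo (0 : ℝ) 1).indicator 1 x + x ^ b * (Ici (1 : ℝ)).indicator 1 x

namespace powerProfile

variable {a b x : ℝ}

lemma of_nonpos (hx : x ≤ 0) : powerProfile a b x = 0 := by
  have hx₁ : x ∉ Ioo (0 : ℝ) 1 := fun h => hx.not_gt h.1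
  have hx₂ : x ∉ Ici (1 : ℝ) := fun h => by linarith [mem_Ici.mp h]
  simp [powerProfile, indicator_of_notMem hx₁, indicator_of_notMem hx₂]

lemma of_mem_Ioo (hx : x ∈ Ioo (0 : ℝ) 1) : powerProfile a b x = x ^ a := by
  have hx₂ : x ∉ Ici (1 : ℝ) := fun h => hx.2.not_ge h
  simp [powerProfile, indicator_of_mem hx, indicator_of_notMem hx₂]

lemma of_one_le (hx : 1 ≤ x) : powerProfile a b x = x ^ b := by
  have hx₁ : x ∉ Ioo (0 : ℝ) 1 := fun h => h.2.not_ge hx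
  simp [powerProfile, indicator_of_notMem hx₁, indicator_of_mem (mem_Ici.mpr hx)]

lemma nonneg (a b x : ℝ) : 0 ≤ powerProfile a b x := by
  rcases le_or_gt x 0 with hx | hx
  · exact (of_nonpos hx).ge
  rcases lt_or_ge x 1 with hx₁ | hx₁
  · rw [of_mem_Ioo ⟨hx, hx₁⟩]; positivity
  · rw [of_one_le hx₁]; positivity

lemma rpow_eq (hx : 0 < x) (s : ℝ) :
    powerProfile a b x ^ s = powerProfile (a * s) (b * s) x := by
  rcases lt_or_ge x 1 with hx₁ | hx₁
  · rw [of_mem_Ioo ⟨hx, hx₁⟩, of_mem_Ioo ⟨hx, hx₁⟩, ← rpow_mul hx.le]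
  · rw [of_one_le hx₁, of_one_le hx₁, ← rpow_mul hx.le]

lemma integrable (ha : -1 < a) (hb : b < -1) : Integrable (powerProfile a b) := by
  have h₀ : IntegrableOn (fun x : ℝ => x ^ a) (Ioo 0 1) :=
    (intervalIntegral.integrableOn_Ioo_rpow_iff zero_lt_one).2 ha
  have h₁ : IntegrableOn (fun x : ℝ => x ^ b) (Ici 1) :=
    (integrableOn_Ici_iff_integrableOn_Ioi (by simp)).2
      ((integrableOn_Ioi_rpow_iff zero_lt_one).2 hb)
  have h := (h₀.integrable_indicator measurableSet_Ioo).add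
    (h₁.integrable_indicator measurableSet_Ici)
  refine h.congr (ae_of_all _ fun x => ?_)
  simp only [Pi.add_apply, indicator_apply, Pi.one_apply, powerProfile]
  split_ifs <;> simp

end powerProfile

lemma rpow_abs_mul_shift_le {g : ℝ → ℝ} {K a b s c : ℝ} (hb : b ≤ 0) (hs : 0 < s)
    (hc : 1 ≤ c) (hg0 : ∀ x ≤ (0 : ℝ), g x = 0)
    (hg : ∀ x : ℝ, 0 < x → |g x| ≤ K * powerProfile a b x) (x : ℝ) :
    |g x * g (x + c)| ^ s ≤ (K ^ 2 * c ^ b) ^ s * powerProfile (a * s) (b * s) x := by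
  rcases le_or_gt x 0 with hx | hx
  · rw [hg0 x hx, zero_mul, abs_zero, zero_rpow hs.ne']
    exact mul_nonneg (by positivity) (powerProfile.nonneg _ _ _)
  have hc₀ : 0 < c := zero_lt_one.trans_le hc
  have hgx := hg x hx
  have hxc : 1 ≤ x + c := by linarith
  have hgxc' : |g (x + c)| ≤ K * (x + c) ^ b := by
    simpa [powerProfile.of_one_le hxc] using hg (x + c) (by linarith)
  have hK : 0 ≤ K :=
    nonneg_of_mul_nonneg_left ((abs_nonneg _).trans hgxc') (by positivity)
  have hgxc : |g (x + c)| ≤ K * c ^ b :=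
    hgxc'.trans (mul_le_mul_of_nonneg_left (rpow_le_rpow_of_nonpos hc₀ (by linarith) hb) hK)
  calc |g x * g (x + c)| ^ s
      ≤ (K * powerProfile a b x * (K * c ^ b)) ^ s := by
        rw [abs_mul]
        gcongr
        exact (abs_nonneg _).trans hgx
    _ = (K ^ 2 * c ^ b) ^ s * powerProfile (a * s) (b * s) x := by
        rw [← powerProfile.rpow_eq hx, ← mul_rpow (by positivity) (powerProfile.nonneg _ _ _)]
        ring_nf

theorem stmt_4_general (α β γ K : ℝ) (hα : 0 < α) (hβ : 0 < β) (hαβ : 2 < α * β)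
    (hγ : -1 / β < γ) (g : ℝ → ℝ) (hg0 : ∀ x ≤ (0:ℝ), g x = 0)
    (hg : ∀ x : ℝ, 0 < x →
      |g x| ≤ K * (x ^ γ * (Ioo (0:ℝ) 1).indicator 1 x + x ^ (-α) * (Ici (1:ℝ)).indicator 1 x)) :
    ∃ C : ℝ, ∀ k : ℕ, 1 ≤ k →
      (∫ x : ℝ, |g x * g (x + k)| ^ (β / 2)) ≤ C * (k : ℝ) ^ (-(α * β / 2)) := by
  have hγβ : -1 < γ * (β / 2) := by
    have := (div_lt_iff₀ hβ).mp hγ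
    nlinarith
  have hαβ' : -α * (β / 2) < -1 := by linarith
  have hφ := powerProfile.integrable hγβ hαβ'
  refine ⟨(K ^ 2) ^ (β / 2) * ∫ x, powerProfile (γ * (β / 2)) (-α * (β / 2)) x, fun k hk => ?_⟩
  have hk : (1 : ℝ) ≤ k := by exact_mod_cast hk
  calc (∫ x : ℝ, |g x * g (x + k)| ^ (β / 2))
      ≤ ∫ x, (K ^ 2 * (k : ℝ) ^ (-α)) ^ (β / 2) *
          powerProfile (γ * (β / 2)) (-α * (β / 2)) x :=
        integral_mono_of_nonneg (ae_of_all _ fun _ => by positivity) (hφ.const_mul _)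
          (ae_of_all _ (rpow_abs_mul_shift_le (neg_nonpos.2 hα.le) (by positivity) hk hg0 hg))
    _ = _ := by
        rw [integral_const_mul, mul_rpow (by positivity) (by positivity),
          ← rpow_mul (by positivity)]
        ring_nf

theorem stmt_4 (α β γ K : ℝ) (hα : 0 < α) (hβ : 0 < β) (hαβ : 2 < α * β)
    (hγ : -1 / β < γ) (hK : 0 < K) (g : ℝ → ℝ) (hg0 : ∀ x ≤ (0:ℝ), g x = 0)
    (hg : ∀ x : ℝ, 0 < x →
      |g x| ≤ K * (x ^ γ * (Ioo (0:ℝ) 1).indicator 1 x + x ^ (-α) * (Ici (1:ℝ)).indicator 1 x)) :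
    ∃ C : ℝ, ∀ k : ℕ, 1 ≤ k →
      (∫ x : ℝ, |g x * g (x + k)| ^ (β / 2)) ≤ C * (k : ℝ) ^ (-(α * β / 2)) :=
  stmt_4_general α β γ K hα hβ hαβ hγ g hg0 hg
end

section
/- Let α > 1 and q > 2 with α ≠ 1 + 1/q, and 1 < α < 1 + 1/q. Then for all n ≥ 1, ∫_{-∞}^0 |(1-s)^{1-α} - (n-s)^{1-α}|^q ds ≤ C n^{q(1-α)+1}, where C depends only on α and q. -/
/-!
For `s ≤ 0` the integrand is bounded in two ways: by `(1 - s) ^ (q * (1 - α))`, dropping the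
subtracted power, and by `((α - 1) * n) ^ q * (1 - s) ^ (-(α * q))`, from the tangent-line
(Bernoulli) inequality for the convex function `x ↦ x ^ (1 - α)`. Integrating the first bound over
`(-n, 0]` and the second over `(-∞, -n]` gives two explicit integrals, each `O(n ^ (q * (1 - α) + 1))`:
the first because `q * (1 - α) > -1`, the second because `α * q > 1`.
-/

open MeasureTheory Real Set

theorem one_add_mul_self_le_rpow_one_add_of_nonpos {t p : ℝ} (ht : 0 ≤ t) (hp1 : -1 ≤ p)
    (hp2 : p ≤ 0) : 1 + p * t ≤ (1 + t) ^ p := by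
  have h1t : 0 < 1 + t := by linarith
  have hle : (1 + t) ^ (-p) ≤ 1 + -p * t :=
    rpow_one_add_le_one_add_mul_self (by linarith) (by linarith) (by linarith)
  have hpt : 0 < 1 + -p * t := by nlinarith
  calc 1 + p * t ≤ (1 + -p * t)⁻¹ := by
        rw [← one_div, le_div_iff₀ hpt]
        nlinarith [sq_nonneg (p * t)]
    _ ≤ ((1 + t) ^ (-p))⁻¹ := inv_anti₀ (rpow_pos_of_pos h1t _) hle
    _ = (1 + t) ^ p := by rw [rpow_neg h1t.le, inv_inv]

theorem rpow_sub_rpow_le_of_nonpos {r x y : ℝ} (hr1 : -1 ≤ r) (hr : r ≤ 0) (hx : 0 < x)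
    (hxy : x ≤ y) : x ^ r - y ^ r ≤ -r * (y - x) * x ^ (r - 1) := by
  set t := (y - x) / x
  have ht : t * x = y - x := div_mul_cancel₀ _ hx.ne'
  have hy : x * (1 + t) = y := by linear_combination ht
  have hyr : y ^ r = x ^ r * (1 + t) ^ r := by
    rw [← mul_rpow hx.le (by positivity), hy]
  have hxt : x ^ r * t = (y - x) * x ^ (r - 1) := by
    simp only [t, rpow_sub_one hx.ne']; ring
  have hb := one_add_mul_self_le_rpow_one_add_of_nonpos (by positivity : 0 ≤ t) hr1 hr
  nlinarith [mul_le_mul_of_nonneg_left hb (rpow_nonneg hx.le r)]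

theorem abs_rpow_sub_rpow_rpow_le_rpow_mul {r q x y : ℝ} (hr : r ≤ 0) (hq : 0 ≤ q) (hx : 0 < x)
    (hxy : x ≤ y) : |x ^ r - y ^ r| ^ q ≤ x ^ (r * q) := by
  have hsub := sub_nonneg.2 (rpow_le_rpow_of_nonpos hx hxy hr)
  rw [rpow_mul hx.le, abs_of_nonneg hsub]
  exact rpow_le_rpow hsub (by linarith [rpow_nonneg (hx.le.trans hxy) r]) hq

theorem abs_rpow_sub_rpow_rpow_le_mul_rpow {r q x y : ℝ} (hr1 : -1 ≤ r) (hr : r ≤ 0)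
    (hq : 0 ≤ q) (hx : 0 < x) (hxy : x ≤ y) :
    |x ^ r - y ^ r| ^ q ≤ (-r * (y - x)) ^ q * x ^ ((r - 1) * q) := by
  have hsub := sub_nonneg.2 (rpow_le_rpow_of_nonpos hx hxy hr)
  rw [rpow_mul hx.le, ← mul_rpow (by nlinarith) (rpow_nonneg hx.le _), abs_of_nonneg hsub]
  exact rpow_le_rpow hsub (rpow_sub_rpow_le_of_nonpos hr1 hr hx hxy) hq

section Kernel

variable {α q n s : ℝ}

theorem abs_one_sub_rpow_sub_rpow_le_rpow (hα : 1 ≤ α) (hq : 0 ≤ q) (hn : 1 ≤ n) (hs : s < 1) :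
    |(1 - s) ^ (1 - α) - (n - s) ^ (1 - α)| ^ q ≤ (1 - s) ^ (q * (1 - α)) := by
  rw [mul_comm q]
  exact abs_rpow_sub_rpow_rpow_le_rpow_mul (by linarith) hq (by linarith) (by linarith)

theorem abs_one_sub_rpow_sub_rpow_le_mul_rpow (hα1 : 1 ≤ α) (hα2 : α ≤ 2) (hq : 0 ≤ q)
    (hn : 1 ≤ n) (hs : s < 1) :
    |(1 - s) ^ (1 - α) - (n - s) ^ (1 - α)| ^ q ≤ ((α - 1) * n) ^ q * (1 - s) ^ (-(α * q)) :=
  calc _ ≤ (-(1 - α) * ((n - s) - (1 - s))) ^ q * (1 - s) ^ ((1 - α - 1) * q) :=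
        abs_rpow_sub_rpow_rpow_le_mul_rpow (by linarith) (by linarith) hq (by linarith)
          (by linarith)
    _ ≤ _ := by
        rw [show (1 - α - 1) * q = -(α * q) by ring]
        exact mul_le_mul_of_nonneg_right (rpow_le_rpow (by nlinarith) (by nlinarith) hq)
          (rpow_nonneg (by linarith) _)

end Kernel

theorem integrableOn_Iic_sub_rpow {p b c : ℝ} (hp : p < -1) (hbc : b < c) :
    IntegrableOn (fun s => (c - s) ^ p) (Iic b) := by
  have hpre : (fun s : ℝ => c - s) ⁻¹' Ici (c - b) = Iic b := by ext; simp
  rw [← hpre]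
  refine ((volume.measurePreserving_sub_left c).integrableOn_comp_preimage
    (MeasurableEquiv.subLeft c).measurableEmbedding (f := fun u => u ^ p)).2 ?_
  exact Iff.mpr integrableOn_Ici_iff_integrableOn_Ioi
    (integrableOn_Ioi_rpow_of_lt hp (by linarith))

theorem integral_Iic_sub_rpow {p b c : ℝ} (hp : p < -1) (hbc : b < c) :
    ∫ s in Iic b, (c - s) ^ p = -(c - b) ^ (p + 1) / (p + 1) := by
  have hpre : (fun s : ℝ => c - s) ⁻¹' Ici (c - b) = Iic b := by ext; simp
  rw [← hpre, (volume.measurePreserving_sub_left c).setIntegral_preimage_emb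
    (MeasurableEquiv.subLeft c).measurableEmbedding (fun u => u ^ p), integral_Ici_eq_integral_Ioi,
    integral_Ioi_rpow_of_lt hp (by linarith)]

theorem integrableOn_Ioc_sub_rpow {p : ℝ} (hp : -1 < p) (a b c : ℝ) :
    IntegrableOn (fun s => (c - s) ^ p) (Ioc a b) := by
  have := (intervalIntegral.intervalIntegrable_rpow' hp (a := c - a) (b := c - b)).comp_sub_left c
  simp only [sub_sub_cancel] at this
  exact this.1

theorem integral_Ioc_sub_rpow {p a b : ℝ} (hp : -1 < p) (hab : a ≤ b) (c : ℝ) :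
    ∫ s in Ioc a b, (c - s) ^ p = ((c - a) ^ (p + 1) - (c - b) ^ (p + 1)) / (p + 1) := by
  rw [← intervalIntegral.integral_of_le hab,
    intervalIntegral.integral_comp_sub_left (fun u => u ^ p), integral_rpow (Or.inl hp)]

theorem setIntegral_Iic_neg_one_sub_rpow_le {p n : ℝ} (hp : p < -1) (hn : 0 < n) :
    ∫ s in Iic (-n), (1 - s) ^ p ≤ n ^ (p + 1) / -(p + 1) := by
  rw [integral_Iic_sub_rpow hp (by linarith), sub_neg_eq_add, neg_div, ← div_neg]
  exact div_le_div_of_nonneg_right (rpow_le_rpow_of_nonpos hn (by linarith) (by linarith))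
    (by linarith)

theorem setIntegral_Ioc_neg_one_sub_rpow_le {p n : ℝ} (hp : -1 < p) (hn : 1 ≤ n) :
    ∫ s in Ioc (-n) 0, (1 - s) ^ p ≤ 2 ^ (p + 1) * n ^ (p + 1) / (p + 1) := by
  have hdouble : (1 + n) ^ (p + 1) ≤ (2 * n) ^ (p + 1) :=
    rpow_le_rpow (by linarith) (by linarith) (by linarith)
  rw [integral_Ioc_sub_rpow hp (by linarith), sub_neg_eq_add, sub_zero, one_rpow,
    ← mul_rpow zero_le_two (by linarith)]
  gcongr
  · linarith
  · linarith

theorem setIntegral_Iic_le_add {F g h : ℝ → ℝ} {a b : ℝ} (hab : a ≤ b)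
    (hF : ∀ s ≤ b, 0 ≤ F s) (hg : IntegrableOn g (Iic a)) (hh : IntegrableOn h (Ioc a b))
    (hFg : ∀ s ≤ a, F s ≤ g s) (hFh : ∀ s ∈ Ioc a b, F s ≤ h s) :
    ∫ s in Iic b, F s ≤ (∫ s in Iic a, g s) + ∫ s in Ioc a b, h s := by
  by_cases hFint : IntegrableOn F (Iic b)
  · rw [← Iic_union_Ioc_eq_Iic hab, setIntegral_union (Iic_disjoint_Ioc le_rfl) measurableSet_Ioc
      (hFint.mono_set (Iic_subset_Iic.2 hab)) (hFint.mono_set Ioc_subset_Iic_self)]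
    exact add_le_add
      (setIntegral_mono_on (hFint.mono_set (Iic_subset_Iic.2 hab)) hg measurableSet_Iic hFg)
      (setIntegral_mono_on (hFint.mono_set Ioc_subset_Iic_self) hh measurableSet_Ioc hFh)
  · rw [integral_undef hFint]
    exact add_nonneg
      (setIntegral_nonneg measurableSet_Iic fun s hs => (hF s (hs.out.trans hab)).trans (hFg s hs))
      (setIntegral_nonneg measurableSet_Ioc fun s hs => (hF s hs.2).trans (hFh s hs))

theorem stmt_6_general (α q : ℝ) (hq : 2 < q) (hα1 : 1 < α) (hα2 : α < 1 + 1 / q) :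
    ∃ C : ℝ, ∀ n : ℕ, 1 ≤ n →
      (∫ s in Iic (0:ℝ), |(1 - s) ^ (1 - α) - ((n : ℝ) - s) ^ (1 - α)| ^ q) ≤
        C * (n : ℝ) ^ (q * (1 - α) + 1) := by
  have hq0 : 0 < q := by linarith
  have hαq : α * q < q + 1 := by
    calc α * q < (1 + 1 / q) * q := by gcongr
      _ = q + 1 := by field_simp
  refine ⟨(α - 1) ^ q / (α * q - 1) + 2 ^ (q * (1 - α) + 1) / (q * (1 - α) + 1), fun n hn => ?_⟩
  have hn1 : (1 : ℝ) ≤ n := by exact_mod_cast hn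
  calc _ ≤ (∫ s in Iic (-(n : ℝ)), ((α - 1) * n) ^ q * (1 - s) ^ (-(α * q))) +
        ∫ s in Ioc (-(n : ℝ)) 0, (1 - s) ^ (q * (1 - α)) :=
        setIntegral_Iic_le_add (by linarith) (fun s _ => by positivity)
          ((integrableOn_Iic_sub_rpow (by nlinarith) (by linarith)).const_mul _)
          (integrableOn_Ioc_sub_rpow (by nlinarith) _ _ _)
          (fun s hs => abs_one_sub_rpow_sub_rpow_le_mul_rpow hα1.le (by nlinarith) hq0.le hn1
            (by linarith))
          (fun s hs => abs_one_sub_rpow_sub_rpow_le_rpow hα1.le hq0.le hn1 (by linarith [hs.2]))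
    _ ≤ ((α - 1) * n) ^ q * (n ^ (-(α * q) + 1) / -(-(α * q) + 1)) +
        2 ^ (q * (1 - α) + 1) * n ^ (q * (1 - α) + 1) / (q * (1 - α) + 1) := by
        rw [integral_const_mul]
        gcongr
        · exact setIntegral_Iic_neg_one_sub_rpow_le (by nlinarith) (by linarith)
        · exact setIntegral_Ioc_neg_one_sub_rpow_le (by nlinarith) hn1
    _ = _ := by
        rw [mul_rpow (by linarith) (by linarith), mul_assoc, ← mul_div_assoc ((n : ℝ) ^ q),
          ← rpow_add (by linarith), show q + (-(α * q) + 1) = q * (1 - α) + 1 by ring]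
        ring

theorem stmt_6 (α q : ℝ) (hq : 2 < q) (hα1 : 1 < α) (hα2 : α < 1 + 1 / q)
    (hαne : α ≠ 1 + 1 / q) :
    ∃ C : ℝ, ∀ n : ℕ, 1 ≤ n →
      (∫ s in Iic (0:ℝ), |(1 - s) ^ (1 - α) - ((n : ℝ) - s) ^ (1 - α)| ^ q) ≤
        C * (n : ℝ) ^ (q * (1 - α) + 1) :=
  stmt_6_general α q hq hα1 hα2
end

section
/- Define A_n(x,s) = n^{-1/2} Σ_{t=1}^n min(1, |x g(t-s)|) for x, s ∈ ℝ, where g satisfies g = 0 on (-∞,0] and |g(u)| ≤ u^γ for 0<u<1, |g(u)| ≤ u^{-α} for u ≥ 1, with β ∈ (0,2), αβ > 2, γ > -1/β. Then for q > 2 there is a constant C with ∫_0^1 x^{-1-β} (∫_0^n A_n(x,s)^q ds) dx ≤ C n^{1-q/2} for all n ≥ 1. -/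
/-!
Fix `s ∈ [0, n]` and put `δ = 1 - fract s ∈ (0, 1]`. In `∑ₜ min 1 |x g (t - s)|` the terms with
`t ≤ s` vanish, the term `t = ⌊s⌋ + 1` is at most `min 1 (x δ^γ)`, and the remaining ones are
bounded by `x (j + 1)^(-α)`, whose sum converges because `α > 1`. Pick `β < b < q` with
`γ b > -1`: then `min 1 (x δ^γ) ^ q ≤ x^b δ^(γ b)`, the `s`-integral of `δ^(γ b)` over `[0, n]` is
`n / (γ b + 1)`, and both `x^(b - 1 - β)` and `x^(q - 1 - β)` are integrable on `(0, 1)`.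
-/

open MeasureTheory Real Set Finset

section FractPower

variable {p : ℝ}

lemma eqOn_one_sub_fract_rpow :
    EqOn (fun s : ℝ => (1 - Int.fract s) ^ p) (fun s => (1 - s) ^ p) (Ioo 0 1) := by
  intro s hs
  simp only [Int.fract_eq_self.2 ⟨hs.1.le, hs.2⟩]

lemma intervalIntegrable_one_sub_rpow (hp : -1 < p) :
    IntervalIntegrable (fun s : ℝ => (1 - s) ^ p) volume 0 1 := by
  simpa using
    ((intervalIntegral.intervalIntegrable_rpow' hp (a := 0) (b := 1)).comp_sub_left 1).symm

lemma intervalIntegrable_one_sub_fract_rpow (hp : -1 < p) (a b : ℝ) :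
    IntervalIntegrable (fun s : ℝ => (1 - Int.fract s) ^ p) volume a b := by
  refine ((Int.fract_periodic ℝ).comp fun u => (1 - u) ^ p).intervalIntegrable₀ one_ne_zero ?_ a b
  rw [intervalIntegrable_iff_integrableOn_Ioo_of_le zero_le_one]
  exact ((intervalIntegrable_iff_integrableOn_Ioo_of_le zero_le_one).1
    (intervalIntegrable_one_sub_rpow hp)).congr_fun eqOn_one_sub_fract_rpow.symm measurableSet_Ioo

lemma integral_one_sub_fract_rpow (hp : -1 < p) (n : ℕ) :
    ∫ s in (0:ℝ)..n, (1 - Int.fract s) ^ p = n / (p + 1) := by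
  have hunit : ∫ s in (0:ℝ)..1, (1 - Int.fract s) ^ p = 1 / (p + 1) := by
    rw [intervalIntegral.integral_of_le zero_le_one, integral_Ioc_eq_integral_Ioo,
      setIntegral_congr_fun measurableSet_Ioo eqOn_one_sub_fract_rpow,
      ← integral_Ioc_eq_integral_Ioo, ← intervalIntegral.integral_of_le zero_le_one,
      intervalIntegral.integral_comp_sub_left (fun s => s ^ p), sub_self, sub_zero,
      integral_rpow (Or.inl hp), one_rpow, zero_rpow (by linarith), sub_zero]
  have := ((Int.fract_periodic ℝ).comp fun u => (1 - u) ^ p).intervalIntegral_add_zsmul_eq n 0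
    (intervalIntegrable_one_sub_fract_rpow hp)
  simp only [zero_add, zsmul_eq_mul, Int.cast_natCast, mul_one, Function.comp_def] at this
  rw [this, hunit]
  ring

end FractPower

lemma Real.add_rpow_le_two_rpow_mul {a b q : ℝ} (ha : 0 ≤ a) (hb : 0 ≤ b) (hq : 1 ≤ q) :
    (a + b) ^ q ≤ 2 ^ (q - 1) * (a ^ q + b ^ q) := by
  have := NNReal.rpow_add_le_mul_rpow_add_rpow ⟨a, ha⟩ ⟨b, hb⟩ hq
  exact_mod_cast this

lemma Real.min_one_rpow_le {u b q : ℝ} (hu : 0 ≤ u) (hb : 0 ≤ b) (hbq : b ≤ q) :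
    min 1 u ^ q ≤ u ^ b :=
  calc min 1 u ^ q ≤ min 1 u ^ b :=
        rpow_le_rpow_of_exponent_ge' (le_min zero_le_one hu) (min_le_left _ _) hb hbq
    _ ≤ u ^ b := rpow_le_rpow (le_min zero_le_one hu) (min_le_right _ _) hb

section KernelBounds

variable {α γ : ℝ} {g : ℝ → ℝ}

lemma min_one_abs_mul_le_of_le_one (hg1 : ∀ u : ℝ, 0 < u → u < 1 → |g u| ≤ u ^ γ)
    (hg2 : ∀ u : ℝ, 1 ≤ u → |g u| ≤ u ^ (-α)) {x u : ℝ} (hx : 0 ≤ x) (hu0 : 0 < u)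
    (hu1 : u ≤ 1) : min 1 |x * g u| ≤ min 1 (x * u ^ γ) := by
  have hgu : |g u| ≤ u ^ γ := by
    rcases hu1.lt_or_eq with hu1 | rfl
    · exact hg1 u hu0 hu1
    · simpa using hg2 1 le_rfl
  rw [abs_mul, abs_of_nonneg hx]
  exact min_le_min_left _ (mul_le_mul_of_nonneg_left hgu hx)

lemma min_one_abs_mul_le_of_one_le (hα : 0 ≤ α) (hg2 : ∀ u : ℝ, 1 ≤ u → |g u| ≤ u ^ (-α))
    {x u v : ℝ} (hx : 0 ≤ x) (hv : 1 ≤ v) (hvu : v ≤ u) :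
    min 1 |x * g u| ≤ x * v ^ (-α) := by
  calc min 1 |x * g u| ≤ x * |g u| := by rw [abs_mul, abs_of_nonneg hx]; exact min_le_right _ _
    _ ≤ x * u ^ (-α) := mul_le_mul_of_nonneg_left (hg2 u (hv.trans hvu)) hx
    _ ≤ x * v ^ (-α) := mul_le_mul_of_nonneg_left
      (rpow_le_rpow_of_nonpos (by linarith) hvu (neg_nonpos.2 hα)) hx

lemma sum_min_one_abs_mul_le (hα : 1 < α) (hg0 : ∀ u ≤ (0:ℝ), g u = 0)
    (hg1 : ∀ u : ℝ, 0 < u → u < 1 → |g u| ≤ u ^ γ)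
    (hg2 : ∀ u : ℝ, 1 ≤ u → |g u| ≤ u ^ (-α)) {x s : ℝ} (hx : 0 ≤ x) (hs : 0 ≤ s) (n : ℕ) :
    ∑ t ∈ Finset.Icc 1 n, min 1 |x * g ((t : ℝ) - s)| ≤
      min 1 (x * (1 - Int.fract s) ^ γ) + x * ∑' j : ℕ, ((j : ℝ) + 1) ^ (-α) := by
  set f : ℕ → ℝ := fun t => min 1 |x * g ((t : ℝ) - s)|
  set m := ⌊s⌋₊
  have hf0 : ∀ t, 0 ≤ f t := fun t => le_min zero_le_one (abs_nonneg _)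
  have hms : (m : ℝ) ≤ s := Nat.floor_le hs
  have hsm : s < m + 1 := Nat.lt_floor_add_one s
  have hfract : (m : ℝ) + 1 - s = 1 - Int.fract s := by
    rw [Int.fract, ← natCast_floor_eq_intCast_floor hs]; ring
  have hbefore : ∑ t ∈ range (m + 1), f t = 0 := by
    refine Finset.sum_eq_zero fun t ht => ?_
    have ht : (t : ℝ) ≤ m := by exact_mod_cast Nat.lt_succ_iff.1 (Finset.mem_range.1 ht)
    simp only [f, hg0 ((t : ℝ) - s) (by linarith), mul_zero, abs_zero, min_eq_right zero_le_one]
  have hfirst : f (m + 1) ≤ min 1 (x * (1 - Int.fract s) ^ γ) := by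
    have hu : ((m + 1 : ℕ) : ℝ) - s = 1 - Int.fract s := by push_cast; exact hfract
    simp only [f, hu]
    exact min_one_abs_mul_le_of_le_one hg1 hg2 hx (by linarith [Int.fract_lt_one s])
      (by linarith [Int.fract_nonneg s])
  have htail : ∀ j : ℕ, f (m + 1 + (j + 1)) ≤ x * ((j : ℝ) + 1) ^ (-α) := fun j =>
    min_one_abs_mul_le_of_one_le (by linarith) hg2 hx (by linarith [j.cast_nonneg (α := ℝ)])
      (by push_cast; linarith)
  have hsummable : Summable fun j : ℕ => ((j : ℝ) + 1) ^ (-α) := by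
    simpa using (summable_nat_add_iff 1).2 (Real.summable_nat_rpow.2 (by linarith : -α < -1))
  calc ∑ t ∈ Finset.Icc 1 n, f t ≤ ∑ t ∈ range (m + 1 + (n + 1)), f t :=
        Finset.sum_le_sum_of_subset_of_nonneg
          (fun t ht => by simp only [Finset.mem_Icc, Finset.mem_range] at ht ⊢; omega)
          (fun t _ _ => hf0 t)
    _ = ∑ j ∈ range n, f (m + 1 + (j + 1)) + f (m + 1) := by
        rw [Finset.sum_range_add, hbefore, zero_add, Finset.sum_range_succ', add_zero]
    _ ≤ ∑ j ∈ range n, x * ((j : ℝ) + 1) ^ (-α) + min 1 (x * (1 - Int.fract s) ^ γ) :=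
        add_le_add (Finset.sum_le_sum fun j _ => htail j) hfirst
    _ ≤ x * ∑' j : ℕ, ((j : ℝ) + 1) ^ (-α) + min 1 (x * (1 - Int.fract s) ^ γ) := by
        rw [← Finset.mul_sum]
        gcongr
        exact hsummable.sum_le_tsum _ fun j _ => by positivity
    _ = _ := add_comm _ _

lemma rpow_sum_min_one_abs_mul_le (hα : 1 < α) (hg0 : ∀ u ≤ (0:ℝ), g u = 0)
    (hg1 : ∀ u : ℝ, 0 < u → u < 1 → |g u| ≤ u ^ γ)
    (hg2 : ∀ u : ℝ, 1 ≤ u → |g u| ≤ u ^ (-α)) {b q x s : ℝ} (hb : 0 ≤ b) (hbq : b ≤ q)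
    (hq : 1 ≤ q) (hx : 0 ≤ x) (hs : 0 ≤ s) (n : ℕ) :
    (∑ t ∈ Finset.Icc 1 n, min 1 |x * g ((t : ℝ) - s)|) ^ q ≤
      2 ^ (q - 1) * (x ^ b * (1 - Int.fract s) ^ (γ * b) +
        (∑' j : ℕ, ((j : ℝ) + 1) ^ (-α)) ^ q * x ^ q) := by
  set K := ∑' j : ℕ, ((j : ℝ) + 1) ^ (-α)
  have hK : 0 ≤ K := tsum_nonneg fun j => by positivity
  have hδ : 0 ≤ 1 - Int.fract s := by linarith [Int.fract_lt_one s]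
  have hM : min 1 (x * (1 - Int.fract s) ^ γ) ^ q ≤ x ^ b * (1 - Int.fract s) ^ (γ * b) := by
    rw [rpow_mul hδ, ← mul_rpow hx (by positivity)]
    exact Real.min_one_rpow_le (by positivity) hb hbq
  calc (∑ t ∈ Finset.Icc 1 n, min 1 |x * g ((t : ℝ) - s)|) ^ q
      ≤ (min 1 (x * (1 - Int.fract s) ^ γ) + x * K) ^ q :=
        rpow_le_rpow (Finset.sum_nonneg fun t _ => le_min zero_le_one (abs_nonneg _))
          (sum_min_one_abs_mul_le hα hg0 hg1 hg2 hx hs n) (by linarith)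
    _ ≤ 2 ^ (q - 1) * (min 1 (x * (1 - Int.fract s) ^ γ) ^ q + (x * K) ^ q) :=
        Real.add_rpow_le_two_rpow_mul (le_min zero_le_one (by positivity)) (by positivity) hq
    _ ≤ 2 ^ (q - 1) * (x ^ b * (1 - Int.fract s) ^ (γ * b) + K ^ q * x ^ q) := by
        rw [mul_rpow hx hK, mul_comm (x ^ q)]
        gcongr

lemma setIntegral_rpow_sum_min_one_abs_mul_le (hα : 1 < α) (hg0 : ∀ u ≤ (0:ℝ), g u = 0)
    (hg1 : ∀ u : ℝ, 0 < u → u < 1 → |g u| ≤ u ^ γ)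
    (hg2 : ∀ u : ℝ, 1 ≤ u → |g u| ≤ u ^ (-α)) {b q ν x : ℝ} (hb : 0 ≤ b) (hbq : b ≤ q)
    (hq : 1 ≤ q) (hγb : -1 < γ * b) (hν : 0 ≤ ν) (hx : 0 ≤ x) (n : ℕ) :
    ∫ s in Icc (0:ℝ) n, (ν * ∑ t ∈ Finset.Icc 1 n, min 1 |x * g ((t : ℝ) - s)|) ^ q ≤
      ν ^ q * n * 2 ^ (q - 1) *
        ((γ * b + 1)⁻¹ * x ^ b + (∑' j : ℕ, ((j : ℝ) + 1) ^ (-α)) ^ q * x ^ q) := by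
  set K := ∑' j : ℕ, ((j : ℝ) + 1) ^ (-α)
  set c := ν ^ q * 2 ^ (q - 1)
  have hfract : IntegrableOn (fun s : ℝ => (1 - Int.fract s) ^ (γ * b)) (Icc 0 n) :=
    (intervalIntegrable_iff_integrableOn_Icc_of_le n.cast_nonneg).1
      (intervalIntegrable_one_sub_fract_rpow hγb 0 n)
  have hdom : IntegrableOn (fun s => c * (x ^ b * (1 - Int.fract s) ^ (γ * b) + K ^ q * x ^ q))
      (Icc 0 n) :=
    ((hfract.const_mul _).add (integrableOn_const measure_Icc_lt_top.ne)).const_mul c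
  calc ∫ s in Icc (0:ℝ) n, (ν * ∑ t ∈ Finset.Icc 1 n, min 1 |x * g ((t : ℝ) - s)|) ^ q
      ≤ ∫ s in Icc (0:ℝ) n, c * (x ^ b * (1 - Int.fract s) ^ (γ * b) + K ^ q * x ^ q) := by
        refine integral_mono_of_nonneg (.of_forall fun s => by positivity) hdom ?_
        filter_upwards [ae_restrict_mem measurableSet_Icc] with s hs
        rw [mul_rpow hν (Finset.sum_nonneg fun t _ => le_min zero_le_one (abs_nonneg _)),
          mul_assoc]
        gcongr
        exact rpow_sum_min_one_abs_mul_le hα hg0 hg1 hg2 hb hbq hq hx hs.1 n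
    _ = c * (x ^ b * (n / (γ * b + 1)) + n * (K ^ q * x ^ q)) := by
        rw [integral_const_mul, integral_add (hfract.const_mul _)
          (integrableOn_const measure_Icc_lt_top.ne), integral_const_mul, setIntegral_const,
          integral_Icc_eq_integral_Ioc, ← intervalIntegral.integral_of_le n.cast_nonneg,
          integral_one_sub_fract_rpow hγb, Real.volume_real_Icc_of_le n.cast_nonneg, smul_eq_mul,
          sub_zero]
    _ = _ := by ring

end KernelBounds

lemma exists_gt_lt_and_neg_one_lt_mul {β q γ : ℝ} (hβq : β < q) (hγβ : -1 < γ * β) :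
    ∃ b, β < b ∧ b < q ∧ -1 < γ * b := by
  have hnear : ∀ᶠ b in nhds β, b < q ∧ -1 < γ * b :=
    (gt_mem_nhds hβq).and ((continuous_const_mul γ).continuousAt.eventually (lt_mem_nhds hγβ))
  obtain ⟨b, ⟨hbq, hγb⟩, hβb⟩ :=
    ((hnear.filter_mono nhdsWithin_le_nhds).and
      (self_mem_nhdsWithin : Ioi β ∈ nhdsWithin β (Ioi β))).exists
  exact ⟨b, hβb, hbq, hγb⟩

lemma setIntegral_Ioo_rpow_mul_le {f : ℝ → ℝ} {β b q c A B : ℝ} (hb : β < b) (hq : β < q)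
    (hf0 : ∀ x ∈ Ioo (0:ℝ) 1, 0 ≤ f x)
    (hf : ∀ x ∈ Ioo (0:ℝ) 1, f x ≤ c * (A * x ^ b + B * x ^ q)) :
    ∫ x in Ioo (0:ℝ) 1, x ^ (-1 - β) * f x ≤
      c * ∫ x in Ioo (0:ℝ) 1, (A * x ^ (b - 1 - β) + B * x ^ (q - 1 - β)) := by
  have hint : ∀ r, β < r → IntegrableOn (fun x : ℝ => x ^ (r - 1 - β)) (Ioo 0 1) := fun r hr =>
    (intervalIntegral.integrableOn_Ioo_rpow_iff one_pos).2 (by linarith)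
  rw [← integral_const_mul]
  refine integral_mono_of_nonneg ?_ ((((hint b hb).const_mul A).add
    ((hint q hq).const_mul B)).const_mul c) ?_
  · filter_upwards [ae_restrict_mem measurableSet_Ioo] with x hx
    exact mul_nonneg (rpow_nonneg hx.1.le _) (hf0 x hx)
  · filter_upwards [ae_restrict_mem measurableSet_Ioo] with x hx
    have hpow : ∀ r, x ^ (r - 1 - β) = x ^ (-1 - β) * x ^ r := fun r => by
      rw [← rpow_add hx.1]; ring_nf
    calc x ^ (-1 - β) * f x ≤ x ^ (-1 - β) * (c * (A * x ^ b + B * x ^ q)) :=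
          mul_le_mul_of_nonneg_left (hf x hx) (rpow_nonneg hx.1.le _)
      _ = _ := by simp only [hpow]; ring

theorem stmt_10 (α β γ q : ℝ) (hβ : 0 < β) (hβ2 : β < 2) (hαβ : 2 < α * β)
    (hγ : -1 / β < γ) (hq : 2 < q) (g : ℝ → ℝ) (hg0 : ∀ u ≤ (0:ℝ), g u = 0)
    (hg1 : ∀ u : ℝ, 0 < u → u < 1 → |g u| ≤ u ^ γ)
    (hg2 : ∀ u : ℝ, 1 ≤ u → |g u| ≤ u ^ (-α)) :
    ∃ C : ℝ, ∀ n : ℕ, 1 ≤ n →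
      (∫ x in Ioo (0:ℝ) 1, x ^ (-1 - β) *
          ∫ s in Icc (0:ℝ) (n : ℝ),
            ((n : ℝ) ^ (-(1/2 : ℝ)) *
              ∑ t ∈ Finset.Icc 1 n, min 1 |x * g ((t : ℝ) - s)|) ^ q) ≤
        C * (n : ℝ) ^ (1 - q / 2) := by
  have hα : 1 < α := by nlinarith
  have hγβ : -1 < γ * β := by rw [div_lt_iff₀ hβ] at hγ; linarith
  obtain ⟨b, hβb, hbq, hγb⟩ := exists_gt_lt_and_neg_one_lt_mul (by linarith) hγβ
  set K := ∑' j : ℕ, ((j : ℝ) + 1) ^ (-α)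
  refine ⟨2 ^ (q - 1) * ∫ x in Ioo (0:ℝ) 1,
    ((γ * b + 1)⁻¹ * x ^ (b - 1 - β) + K ^ q * x ^ (q - 1 - β)), fun n hn => ?_⟩
  have hn0 : (0:ℝ) < n := by exact_mod_cast hn
  have hscale : ((n : ℝ) ^ (-(1/2 : ℝ))) ^ q * n = (n : ℝ) ^ (1 - q / 2) := by
    rw [← rpow_mul hn0.le, ← rpow_add_one hn0.ne']
    ring_nf
  calc _ ≤ ((n : ℝ) ^ (-(1/2 : ℝ))) ^ q * n * 2 ^ (q - 1) * ∫ x in Ioo (0:ℝ) 1,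
          ((γ * b + 1)⁻¹ * x ^ (b - 1 - β) + K ^ q * x ^ (q - 1 - β)) :=
        setIntegral_Ioo_rpow_mul_le hβb (by linarith)
          (fun x _ => integral_nonneg fun s => by positivity)
          (fun x hx => setIntegral_rpow_sum_min_one_abs_mul_le hα hg0 hg1 hg2 (by linarith)
            hbq.le (by linarith) hγb (by positivity) hx.1.le n)
    _ = _ := by rw [← hscale]; ring
end
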